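/- Let 1 ≤ a < h and let q_k : Ω → ℂ (a+1 ≤ k ≤ h) be holomorphic functions on an open set Ω ⊆ ℂ^a. For z = (z_1,…,z_a) ∈ Ω define ω(z) = Σ_{k=a+1}^h q_k(z)·δ_k + Σ_{i=1}^a z_i·δ_i + δ_0; for 1 ≤ i ≤ a define ω_i(z) = (∂ω/∂z_i)(z) = Σ_{k=a+1}^h (∂q_k/∂z_i)(z)·δ_k + δ_i; and for a+1 ≤ k ≤ h define ω_k(z) = ε_k + Σ_{i=1}^a (∂q_k/∂z_i)(z)·ε_i + s_k(z)·ε_0, where s_k(z) = Σ_{i=1}^a z_i·(∂q_k/∂z_i)(z) − q_k(z). Then for every z ∈ Ω the h+1 vectors ω(z), ω_1(z), …, ω_a(z), ω_{a+1}(z), …, ω_h(z) span an isotropic subspace of ℂ^{2h+2}: all pairwise values of ⟨·,·⟩ on these vectors vanish. -/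
import Mathlib


/-- `ℂ^{2h+2}` in the complex basis `ε_0, ε_1, …, ε_h, δ_0, δ_1, …, δ_h`, with the
`ε`-coordinates recorded as `(ε_0; ε_1,…,ε_a; ε_{a+1},…,ε_h)` (with `b = h − a`) and
similarly for the `δ`-coordinates. -/
abbrev VD (a b : ℕ) : Type :=
  (ℂ × (Fin a → ℂ) × (Fin b → ℂ)) × (ℂ × (Fin a → ℂ) × (Fin b → ℂ))

/-- The symplectic form: `⟨ε_i, ε_j⟩ = ⟨δ_i, δ_j⟩ = 0`, `⟨ε_0, δ_0⟩ = 2√−1`,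
`⟨ε_i, δ_i⟩ = −2√−1` for `1 ≤ i ≤ a`, and `⟨ε_k, δ_k⟩ = 2√−1` for `a+1 ≤ k ≤ h`. -/
noncomputable def symD {a b : ℕ} (x y : VD a b) : ℂ :=
  2 * Complex.I * (x.1.1 * y.2.1 - x.2.1 * y.1.1)
    - 2 * Complex.I * ∑ i, (x.1.2.1 i * y.2.2.1 i - x.2.2.1 i * y.1.2.1 i)
    + 2 * Complex.I * ∑ k, (x.1.2.2 k * y.2.2.2 k - x.2.2.2 k * y.1.2.2 k)

/-- The partial derivative `∂f/∂z_i` of a function on `ℂ^a`. -/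
noncomputable def pdA {a : ℕ} (i : Fin a) (f : (Fin a → ℂ) → ℂ)
    (z : Fin a → ℂ) : ℂ :=
  fderiv ℂ f z (Pi.single i 1)

/-- `ω(z) = Σ_k q_k(z)·δ_k + Σᵢ z_i·δ_i + δ_0`. -/
noncomputable def omD {a b : ℕ} (q : Fin b → (Fin a → ℂ) → ℂ) (z : Fin a → ℂ) :
    VD a b :=
  ((0, 0, 0), (1, z, fun k => q k z))

/-- `ω_i(z) = ∂ω/∂z_i = Σ_k (∂q_k/∂z_i)(z)·δ_k + δ_i` for `1 ≤ i ≤ a`. -/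
noncomputable def omDi {a b : ℕ} (q : Fin b → (Fin a → ℂ) → ℂ) (i : Fin a)
    (z : Fin a → ℂ) : VD a b :=
  ((0, 0, 0), (0, Pi.single i 1, fun k => pdA i (q k) z))

/-- `ω_k(z) = ε_k + Σᵢ (∂q_k/∂z_i)(z)·ε_i + s_k(z)·ε_0` for `a+1 ≤ k ≤ h`, where
`s_k(z) = Σᵢ z_i (∂q_k/∂z_i)(z) − q_k(z)`. -/
noncomputable def omDk {a b : ℕ} (q : Fin b → (Fin a → ℂ) → ℂ) (k : Fin b)
    (z : Fin a → ℂ) : VD a b :=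
  ((∑ i, z i * pdA i (q k) z - q k z, fun i => pdA i (q k) z, Pi.single k 1),
    (0, 0, 0))

/-- In the degenerate (non-tube) construction, the `h+1` vectors
`ω(z), ω_1(z), …, ω_a(z), ω_{a+1}(z), …, ω_h(z)` span an isotropic subspace:
all pairwise values of the symplectic form on them vanish. -/
theorem stmt15 {h a : ℕ} (ha : 1 ≤ a) (hah : a < h) (b : ℕ) (hb : b = h - a)
    (Ω : Set (Fin a → ℂ)) (hΩ : IsOpen Ω)
    (q : Fin b → (Fin a → ℂ) → ℂ) (hq : ∀ k, DifferentiableOn ℂ (q k) Ω)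
    (z : Fin a → ℂ) (hz : z ∈ Ω) :
    ∀ u ∈ ({omD q z} ∪ Set.range (fun i => omDi q i z)
        ∪ Set.range (fun k => omDk q k z) : Set (VD a b)),
      ∀ v ∈ ({omD q z} ∪ Set.range (fun i => omDi q i z)
        ∪ Set.range (fun k => omDk q k z) : Set (VD a b)),
        symD u v = 0 := by
  have eA : ∀ (c : Fin a → ℂ) (j : Fin a), ∑ x : Fin a, c x * (Pi.single j 1 : Fin a → ℂ) x = c j := by
    intro c j; simp [Pi.single_apply]
  have eA' : ∀ (c : Fin a → ℂ) (j : Fin a), ∑ x : Fin a, (Pi.single j 1 : Fin a → ℂ) x * c x = c j := by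
    intro c j; simp [Pi.single_apply]
  have eB : ∀ (c : Fin b → ℂ) (k : Fin b), ∑ x : Fin b, c x * (Pi.single k 1 : Fin b → ℂ) x = c k := by
    intro c k; simp [Pi.single_apply]
  have eB' : ∀ (c : Fin b → ℂ) (k : Fin b), ∑ x : Fin b, (Pi.single k 1 : Fin b → ℂ) x * c x = c k := by
    intro c k; simp [Pi.single_apply]
  have ecomm : ∀ k : Fin b, ∑ x, pdA x (q k) z * z x = ∑ x, z x * pdA x (q k) z := by
    intro k; exact Finset.sum_congr rfl fun x _ => mul_comm _ _
  intro u hu v hv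
  obtain (rfl | ⟨i, rfl⟩) | ⟨k, rfl⟩ := hu <;>
    obtain (rfl | ⟨j, rfl⟩) | ⟨l, rfl⟩ := hv
  · simp [symD, omD]
  · simp [symD, omD, omDi]
  · simp only [symD, omD, omDk, Pi.zero_apply, mul_zero, zero_mul, sub_zero,
      zero_sub, one_mul, Finset.sum_neg_distrib]
    rw [eB (fun x => q x z) l]
    ring
  · simp [symD, omD, omDi]
  · simp [symD, omDi]
  · simp only [symD, omDi, omDk, Pi.zero_apply, mul_zero, zero_mul, sub_zero,
      zero_sub, Finset.sum_neg_distrib]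
    rw [eB (fun x => pdA i (q x) z) l, eA' (fun x => pdA x (q l) z) i]
    ring
  · simp only [symD, omD, omDk, Pi.zero_apply, mul_zero, zero_mul, sub_zero,
      mul_one]
    rw [ecomm k, eB' (fun x => q x z) k]
    ring
  · simp only [symD, omDi, omDk, Pi.zero_apply, mul_zero, zero_mul, sub_zero,
      zero_sub]
    rw [eB' (fun x => pdA j (q x) z) k] <;> try rw [eA' (fun x => pdA x (q k) z) j]
    try rw [eA (fun x => pdA x (q k) z) j]
    ring
  · simp [symD, omDk]
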